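/- arXiv:1801.03190 — 3 statements merged into one kernel-verified Lean document; each statement's English description precedes it below -/
import Mathlib

section
/- Consider an uncertain weighted graph where each edge e has reward r(e) ≥ 0 and risk σ(e) ≥ 0 with σ(e) ≤ B, and let the edges be sorted so that r(e₁)/σ(e₁) ≥ ... ≥ r(e_m)/σ(e_m) (all σ(e_i) > 0). Let M^(i) denote a maximum-reward matching among edges {e₁,...,e_i}, and suppose index ℓ satisfies Σ_{e ∈ M^(ℓ)} σ(e) ≤ B < Σ_{e ∈ M^(ℓ+1)} σ(e). Then for every matching M* with Σ_{e∈M*} σ(e) ≤ B, we have Σ_{e∈M*} r(e) ≤ 3 · max(Σ_{e∈M^(ℓ)} r(e), r(e_{ℓ+1})). -/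
/-- A set of edge indices forms a matching if the corresponding edges are
pairwise vertex-disjoint. -/
def IsIndexMatching {V : Type*} [DecidableEq V] {m : ℕ}
    (e : Fin m → Finset V) (M : Finset (Fin m)) : Prop :=
  ∀ i ∈ M, ∀ j ∈ M, i ≠ j → Disjoint (e i) (e j)

theorem stmt_5 {V : Type*} [DecidableEq V] {m : ℕ}
    (e : Fin m → Finset V) (hedge : ∀ i, (e i).card = 2)
    (r σ : Fin m → ℝ) (B : ℝ) (hB : 0 ≤ B)
    (hr : ∀ i, 0 ≤ r i) (hσ : ∀ i, 0 < σ i) (hσB : ∀ i, σ i ≤ B)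
    (hsorted : ∀ i j : Fin m, i ≤ j → r j / σ j ≤ r i / σ i)
    (ℓ : Fin m)
    (Mℓ Mℓ1 : Finset (Fin m))
    (hMℓidx : ∀ i ∈ Mℓ, (i : ℕ) < (ℓ : ℕ))
    (hMℓ : IsIndexMatching e Mℓ)
    (hMℓmax : ∀ N : Finset (Fin m), (∀ i ∈ N, (i : ℕ) < (ℓ : ℕ)) →
      IsIndexMatching e N → ∑ i ∈ N, r i ≤ ∑ i ∈ Mℓ, r i)
    (hMℓ1idx : ∀ i ∈ Mℓ1, (i : ℕ) < (ℓ : ℕ) + 1)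
    (hMℓ1 : IsIndexMatching e Mℓ1)
    (hMℓ1max : ∀ N : Finset (Fin m), (∀ i ∈ N, (i : ℕ) < (ℓ : ℕ) + 1) →
      IsIndexMatching e N → ∑ i ∈ N, r i ≤ ∑ i ∈ Mℓ1, r i)
    (hriskℓ : ∑ i ∈ Mℓ, σ i ≤ B)
    (hriskℓ1 : B < ∑ i ∈ Mℓ1, σ i) :
    ∀ Mstar : Finset (Fin m), IsIndexMatching e Mstar →
      ∑ i ∈ Mstar, σ i ≤ B →
      ∑ i ∈ Mstar, r i ≤ 3 * max (∑ i ∈ Mℓ, r i) (r ℓ) := by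
  intro Mstar hMstar hrisk
  set X := max (∑ i ∈ Mℓ, r i) (r ℓ) with hX
  set A := Mstar.filter (fun i : Fin m => (i : ℕ) < (ℓ : ℕ)) with hA
  set C := Mstar.filter (fun i : Fin m => ¬ ((i : ℕ) < (ℓ : ℕ))) with hC
  -- part A
  have hAsub : A ⊆ Mstar := Finset.filter_subset _ _
  have hAr : ∑ i ∈ A, r i ≤ ∑ i ∈ Mℓ, r i := by
    apply hMℓmax
    · intro i hi
      exact (Finset.mem_filter.mp hi).2
    · intro i hi j hj hij
      exact hMstar i (hAsub hi) j (hAsub hj) hij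
  -- part C
  have hCsub : C ⊆ Mstar := Finset.filter_subset _ _
  have hq : 0 ≤ r ℓ / σ ℓ := div_nonneg (hr ℓ) (hσ ℓ).le
  have hCr : ∑ i ∈ C, r i ≤ (r ℓ / σ ℓ) * B := by
    have h1 : ∑ i ∈ C, r i ≤ ∑ i ∈ C, (r ℓ / σ ℓ) * σ i := by
      apply Finset.sum_le_sum
      intro i hi
      have hle : ℓ ≤ i := by
        have := (Finset.mem_filter.mp hi).2
        exact Fin.le_def.mpr (Nat.le_of_not_lt this)
      have := hsorted ℓ i hle
      calc r i = (r i / σ i) * σ i := (div_mul_cancel₀ (r i) (hσ i).ne').symm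
        _ ≤ (r ℓ / σ ℓ) * σ i := by
            exact mul_le_mul_of_nonneg_right this (hσ i).le
    have h2 : ∑ i ∈ C, σ i ≤ ∑ i ∈ Mstar, σ i :=
      Finset.sum_le_sum_of_subset_of_nonneg hCsub (fun i _ _ => (hσ i).le)
    calc ∑ i ∈ C, r i ≤ ∑ i ∈ C, (r ℓ / σ ℓ) * σ i := h1
      _ = (r ℓ / σ ℓ) * ∑ i ∈ C, σ i := by rw [Finset.mul_sum]
      _ ≤ (r ℓ / σ ℓ) * B := by
          exact mul_le_mul_of_nonneg_left (le_trans h2 hrisk) hq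
  -- bound (rℓ/σℓ)*B by reward of Mℓ1
  have hBMℓ1 : (r ℓ / σ ℓ) * B ≤ ∑ i ∈ Mℓ1, r i := by
    calc (r ℓ / σ ℓ) * B ≤ (r ℓ / σ ℓ) * ∑ i ∈ Mℓ1, σ i :=
          mul_le_mul_of_nonneg_left hriskℓ1.le hq
      _ = ∑ i ∈ Mℓ1, (r ℓ / σ ℓ) * σ i := by rw [Finset.mul_sum]
      _ ≤ ∑ i ∈ Mℓ1, r i := by
          apply Finset.sum_le_sum
          intro i hi
          have hi' : i ≤ ℓ := Fin.le_def.mpr (Nat.lt_succ_iff.mp (hMℓ1idx i hi))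
          have := hsorted i ℓ hi'
          calc (r ℓ / σ ℓ) * σ i ≤ (r i / σ i) * σ i :=
                mul_le_mul_of_nonneg_right this (hσ i).le
            _ = r i := div_mul_cancel₀ (r i) (hσ i).ne'
  -- Mℓ1 reward ≤ Mℓ reward + r ℓ
  have hMℓ1r : ∑ i ∈ Mℓ1, r i ≤ (∑ i ∈ Mℓ, r i) + r ℓ := by
    have herase : ∑ i ∈ Mℓ1.erase ℓ, r i ≤ ∑ i ∈ Mℓ, r i := by
      apply hMℓmax
      · intro i hi
        have h1 := Finset.mem_of_mem_erase hi
        have h2 := Finset.ne_of_mem_erase hi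
        have h3 := hMℓ1idx i h1
        have h4 : (i : ℕ) ≠ (ℓ : ℕ) := fun h => h2 (Fin.ext h)
        omega
      · intro i hi j hj hij
        exact hMℓ1 i (Finset.mem_of_mem_erase hi) j (Finset.mem_of_mem_erase hj) hij
    have hsplit : ∑ i ∈ Mℓ1, r i ≤ (∑ i ∈ Mℓ1.erase ℓ, r i) + r ℓ := by
      by_cases hmem : ℓ ∈ Mℓ1
      · exact le_of_eq (Finset.sum_erase_add _ _ hmem).symm
      · rw [Finset.erase_eq_of_notMem hmem]
        exact le_add_of_nonneg_right (hr ℓ)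
    linarith
  -- combine
  have hsum : ∑ i ∈ Mstar, r i = (∑ i ∈ A, r i) + ∑ i ∈ C, r i := by
    rw [hA, hC]
    exact (Finset.sum_filter_add_sum_filter_not Mstar _ _).symm
  have h1 : ∑ i ∈ Mℓ, r i ≤ X := le_max_left _ _
  have h2 : r ℓ ≤ X := le_max_right _ _
  linarith
end

section
/- With the same setup as the 1/3-approximation theorem, but where each M^(i) is only guaranteed to be a c-approximate maximum-reward matching among {e₁,...,e_i} (0 < c ≤ 1), the output max(R(M^(ℓ)), r(e_{ℓ+1})) is at least c/(2+c) times the reward of any matching with risk at most B. In particular, with a 1/2-approximate (greedy) matching algorithm one obtains a 1/5-approximation. -/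
theorem stmt_6 {V : Type*} [DecidableEq V] {m : ℕ}
    (e : Fin m → Finset V) (hedge : ∀ i, (e i).card = 2)
    (r σ : Fin m → ℝ) (B c : ℝ) (hB : 0 ≤ B) (hc0 : 0 < c) (hc1 : c ≤ 1)
    (hr : ∀ i, 0 ≤ r i) (hσ : ∀ i, 0 < σ i) (hσB : ∀ i, σ i ≤ B)
    (hsorted : ∀ i j : Fin m, i ≤ j → r j / σ j ≤ r i / σ i)
    (ℓ : Fin m)
    (Mℓ Mℓ1 : Finset (Fin m))
    (hMℓidx : ∀ i ∈ Mℓ, (i : ℕ) < (ℓ : ℕ))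
    (hMℓ : IsIndexMatching e Mℓ)
    (hMℓmax : ∀ N : Finset (Fin m), (∀ i ∈ N, (i : ℕ) < (ℓ : ℕ)) →
      IsIndexMatching e N → c * ∑ i ∈ N, r i ≤ ∑ i ∈ Mℓ, r i)
    (hMℓ1idx : ∀ i ∈ Mℓ1, (i : ℕ) < (ℓ : ℕ) + 1)
    (hMℓ1 : IsIndexMatching e Mℓ1)
    (hMℓ1max : ∀ N : Finset (Fin m), (∀ i ∈ N, (i : ℕ) < (ℓ : ℕ) + 1) →
      IsIndexMatching e N → c * ∑ i ∈ N, r i ≤ ∑ i ∈ Mℓ1, r i)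
    (hriskℓ : ∑ i ∈ Mℓ, σ i ≤ B)
    (hriskℓ1 : B < ∑ i ∈ Mℓ1, σ i) :
    ∀ Mstar : Finset (Fin m), IsIndexMatching e Mstar →
      ∑ i ∈ Mstar, σ i ≤ B →
      c / (2 + c) * ∑ i ∈ Mstar, r i ≤ max (∑ i ∈ Mℓ, r i) (r ℓ) := by
  intro Mstar hMstar hMstarRisk
  classical
  set A := Mstar.filter (fun i : Fin m => (i : ℕ) < (ℓ : ℕ)) with hA
  set Bs := Mstar.filter (fun i : Fin m => ¬ (i : ℕ) < (ℓ : ℕ)) with hBs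
  set X := max (∑ i ∈ Mℓ, r i) (r ℓ) with hX
  have hXℓ : ∑ i ∈ Mℓ, r i ≤ X := le_max_left _ _
  have hXr : r ℓ ≤ X := le_max_right _ _
  set α := r ℓ / σ ℓ with hα
  have hα0 : 0 ≤ α := div_nonneg (hr ℓ) (hσ ℓ).le
  have f1 : c * ∑ i ∈ A, r i ≤ ∑ i ∈ Mℓ, r i := by
    apply hMℓmax
    · intro i hi; exact (Finset.mem_filter.mp hi).2
    · intro i hi j hj hij
      exact hMstar i (Finset.mem_filter.mp hi).1 j (Finset.mem_filter.mp hj).1 hij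
  have f2 : ∑ i ∈ Bs, r i ≤ α * ∑ i ∈ Bs, σ i := by
    rw [Finset.mul_sum]
    apply Finset.sum_le_sum
    intro i hi
    have hiℓ : ℓ ≤ i := by
      have := (Finset.mem_filter.mp hi).2
      exact Fin.le_def.mpr (Nat.le_of_not_lt this)
    have h := hsorted ℓ i hiℓ
    have h2 := (div_le_div_iff₀ (hσ i) (hσ ℓ)).mp h
    rw [hα, div_mul_eq_mul_div, le_div_iff₀ (hσ ℓ)]
    linarith
  have f3 : ∑ i ∈ Bs, σ i ≤ B := by
    refine le_trans ?_ hMstarRisk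
    apply Finset.sum_le_sum_of_subset_of_nonneg (Finset.filter_subset _ _)
    intro i _ _; exact (hσ i).le
  have f4 : α * B ≤ α * ∑ i ∈ Mℓ1, σ i :=
    mul_le_mul_of_nonneg_left hriskℓ1.le hα0
  have f5 : α * ∑ i ∈ Mℓ1, σ i ≤ ∑ i ∈ Mℓ1, r i := by
    rw [Finset.mul_sum]
    apply Finset.sum_le_sum
    intro i hi
    have hiℓ : i ≤ ℓ := by
      have := hMℓ1idx i hi
      exact Fin.le_def.mpr (Nat.lt_succ_iff.mp this)
    have h := hsorted i ℓ hiℓ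
    have h2 := (div_le_div_iff₀ (hσ ℓ) (hσ i)).mp h
    rw [hα, div_mul_eq_mul_div, div_le_iff₀ (hσ ℓ)]
    linarith
  have f6 : ∑ i ∈ Mℓ1, r i ≤ ∑ i ∈ Mℓ1.erase ℓ, r i + r ℓ := by
    by_cases h : ℓ ∈ Mℓ1
    · rw [Finset.sum_erase_add _ _ h]
    · rw [Finset.erase_eq_of_notMem h]
      linarith [hr ℓ]
  have f7 : c * ∑ i ∈ Mℓ1.erase ℓ, r i ≤ ∑ i ∈ Mℓ, r i := by
    apply hMℓmax
    · intro i hi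
      have h1 := Finset.mem_of_mem_erase hi
      have h2 := Finset.ne_of_mem_erase hi
      have h3 := hMℓ1idx i h1
      have h4 : (i : ℕ) ≠ (ℓ : ℕ) := fun hh => h2 (Fin.ext hh)
      omega
    · intro i hi j hj hij
      exact hMℓ1 i (Finset.mem_of_mem_erase hi) j (Finset.mem_of_mem_erase hj) hij
  have hsum : ∑ i ∈ Mstar, r i = ∑ i ∈ A, r i + ∑ i ∈ Bs, r i :=
    (Finset.sum_filter_add_sum_filter_not _ _ _).symm
  have hαB : α * ∑ i ∈ Bs, σ i ≤ α * B := mul_le_mul_of_nonneg_left f3 hα0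
  have hBr : ∑ i ∈ Bs, r i ≤ ∑ i ∈ Mℓ1.erase ℓ, r i + r ℓ := by linarith
  have hc2 : c * ∑ i ∈ Bs, r i ≤ c * (∑ i ∈ Mℓ1.erase ℓ, r i) + c * r ℓ := by
    have := mul_le_mul_of_nonneg_left hBr hc0.le
    linarith [mul_add c (∑ i ∈ Mℓ1.erase ℓ, r i) (r ℓ), this]
  have hcr : c * r ℓ ≤ c * X := mul_le_mul_of_nonneg_left hXr hc0.le
  rw [div_mul_eq_mul_div, div_le_iff₀ (by linarith : (0:ℝ) < 2 + c), hsum]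
  nlinarith [f1, f7, hc2, hcr, hXℓ]
end

section
/- Under the variance-based risk measure risk(M) = Σ_{e∈M} σ(e)², the same 1/3-approximation guarantee holds: with edges sorted by nonincreasing α(e) = r(e)/σ(e)², M^(i) the maximum-reward matching among the first i edges, and ℓ an index with risk(M^(ℓ)) ≤ B < risk(M^(ℓ+1)), every matching M* with risk(M*) ≤ B satisfies R(M*) ≤ 3·max(R(M^(ℓ)), r(e_{ℓ+1})). -/
lemma IsIndexMatching.subset {V : Type*} [DecidableEq V] {m : ℕ}
    {e : Fin m → Finset V} {M N : Finset (Fin m)}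
    (h : IsIndexMatching e M) (hN : N ⊆ M) : IsIndexMatching e N :=
  fun i hi j hj hij => h i (hN hi) j (hN hj) hij

theorem stmt_17 {V : Type*} [DecidableEq V] {m : ℕ}
    (e : Fin m → Finset V) (hedge : ∀ i, (e i).card = 2)
    (r σ : Fin m → ℝ) (B : ℝ) (hB : 0 ≤ B)
    (hr : ∀ i, 0 ≤ r i) (hσ : ∀ i, 0 < σ i) (hσB : ∀ i, σ i ^ 2 ≤ B)
    (hsorted : ∀ i j : Fin m, i ≤ j → r j / σ j ^ 2 ≤ r i / σ i ^ 2)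
    (ℓ : Fin m)
    (Mℓ Mℓ1 : Finset (Fin m))
    (hMℓidx : ∀ i ∈ Mℓ, (i : ℕ) < (ℓ : ℕ))
    (hMℓ : IsIndexMatching e Mℓ)
    (hMℓmax : ∀ N : Finset (Fin m), (∀ i ∈ N, (i : ℕ) < (ℓ : ℕ)) →
      IsIndexMatching e N → ∑ i ∈ N, r i ≤ ∑ i ∈ Mℓ, r i)
    (hMℓ1idx : ∀ i ∈ Mℓ1, (i : ℕ) < (ℓ : ℕ) + 1)
    (hMℓ1 : IsIndexMatching e Mℓ1)
    (hMℓ1max : ∀ N : Finset (Fin m), (∀ i ∈ N, (i : ℕ) < (ℓ : ℕ) + 1) →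
      IsIndexMatching e N → ∑ i ∈ N, r i ≤ ∑ i ∈ Mℓ1, r i)
    (hriskℓ : ∑ i ∈ Mℓ, σ i ^ 2 ≤ B)
    (hriskℓ1 : B < ∑ i ∈ Mℓ1, σ i ^ 2) :
    ∀ Mstar : Finset (Fin m), IsIndexMatching e Mstar →
      ∑ i ∈ Mstar, σ i ^ 2 ≤ B →
      ∑ i ∈ Mstar, r i ≤ 3 * max (∑ i ∈ Mℓ, r i) (r ℓ) := by
  intro Mstar hmatch hrisk
  have hσ2 : ∀ i : Fin m, (0:ℝ) < σ i ^ 2 := fun i => pow_pos (hσ i) 2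
  set α : ℝ := r ℓ / σ ℓ ^ 2 with hα
  have hα0 : 0 ≤ α := div_nonneg (hr ℓ) (hσ2 ℓ).le
  set A := Mstar.filter (fun i : Fin m => (i : ℕ) < (ℓ : ℕ)) with hA
  set C := Mstar.filter (fun i : Fin m => ¬ (i : ℕ) < (ℓ : ℕ)) with hC
  have hsplit : ∑ i ∈ Mstar, r i = ∑ i ∈ A, r i + ∑ i ∈ C, r i :=
    (Finset.sum_filter_add_sum_filter_not Mstar _ r).symm
  -- bound the low part
  have hAle : ∑ i ∈ A, r i ≤ ∑ i ∈ Mℓ, r i := by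
    refine hMℓmax A (fun i hi => (Finset.mem_filter.mp hi).2)
      (hmatch.subset (Finset.filter_subset _ _))
  -- bound the high part
  have hCle : ∑ i ∈ C, r i ≤ α * B := by
    have h1 : ∑ i ∈ C, r i ≤ ∑ i ∈ C, α * σ i ^ 2 := by
      refine Finset.sum_le_sum fun i hi => ?_
      have hiℓ : ℓ ≤ i := by
        have := (Finset.mem_filter.mp hi).2
        exact Fin.le_def.mpr (Nat.le_of_not_lt this)
      have := hsorted ℓ i hiℓ
      calc r i = (r i / σ i ^ 2) * σ i ^ 2 := (div_mul_cancel₀ _ (hσ2 i).ne').symm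
        _ ≤ α * σ i ^ 2 := mul_le_mul_of_nonneg_right this (hσ2 i).le
    have h2 : ∑ i ∈ C, σ i ^ 2 ≤ B := by
      refine le_trans ?_ hrisk
      rw [hC]
      refine Finset.sum_le_sum_of_subset_of_nonneg (Finset.filter_subset _ _)
        fun i _ _ => (hσ2 i).le
    calc ∑ i ∈ C, r i ≤ α * ∑ i ∈ C, σ i ^ 2 := by rw [Finset.mul_sum]; exact h1
      _ ≤ α * B := mul_le_mul_of_nonneg_left h2 hα0
  have hαB : α * B ≤ ∑ i ∈ Mℓ1, r i := by
    have h1 : α * B ≤ α * ∑ i ∈ Mℓ1, σ i ^ 2 :=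
      mul_le_mul_of_nonneg_left hriskℓ1.le hα0
    have h2 : α * ∑ i ∈ Mℓ1, σ i ^ 2 ≤ ∑ i ∈ Mℓ1, r i := by
      rw [Finset.mul_sum]
      refine Finset.sum_le_sum fun i hi => ?_
      have hiℓ : i ≤ ℓ := Fin.le_def.mpr (Nat.lt_succ_iff.mp (hMℓ1idx i hi))
      have := hsorted i ℓ hiℓ
      calc α * σ i ^ 2 ≤ (r i / σ i ^ 2) * σ i ^ 2 :=
            mul_le_mul_of_nonneg_right this (hσ2 i).le
        _ = r i := div_mul_cancel₀ _ (hσ2 i).ne'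
    exact h1.trans h2
  have hMℓ1le : ∑ i ∈ Mℓ1, r i ≤ ∑ i ∈ Mℓ, r i + r ℓ := by
    have herase : ∑ i ∈ Mℓ1.erase ℓ, r i ≤ ∑ i ∈ Mℓ, r i := by
      refine hMℓmax _ (fun i hi => ?_) (hMℓ1.subset (Finset.erase_subset _ _))
      have h1 := Finset.mem_erase.mp hi
      have := Nat.lt_succ_iff.mp (hMℓ1idx i h1.2)
      exact lt_of_le_of_ne this (fun h => h1.1 (Fin.ext h))
    by_cases hmem : ℓ ∈ Mℓ1
    · rw [← Finset.add_sum_erase _ r hmem]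
      linarith
    · rw [Finset.erase_eq_of_notMem hmem] at herase
      linarith [hr ℓ]
  have h1 : ∑ i ∈ Mℓ, r i ≤ max (∑ i ∈ Mℓ, r i) (r ℓ) := le_max_left _ _
  have h2 : r ℓ ≤ max (∑ i ∈ Mℓ, r i) (r ℓ) := le_max_right _ _
  linarith
end
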